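/- In the deterministic MDP M(γ, ε, ℓ), fix k ≥ 1 and for each integer j let π_j be the stationary policy that takes right in state j and left in every other state (and left everywhere if j ≤ 1). Then the periodic non-stationary policy π_{k,ℓ} that cycles through π_k, π_{k−1}, …, π_{k−ℓ+1} has value at state k equal to v_{π_{k,ℓ}}(k) = r_k/(1 − γ^ℓ) = −2ε(γ − γ^k)/((1 − γ)(1 − γ^ℓ)): starting from k, the trajectory takes right once (reward r_k, landing in k + ℓ − 1), then takes left ℓ − 1 times back to k, and repeats this ℓ-step loop forever. -/

import Mathlib

/-!
From `k ≥ 2`, the policy `π_{k,ℓ}` meets the state `k` at every phase `0 (mod ℓ)`, where `π_k`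
goes right, and meets `k + ℓ - m` at phase `m ≠ 0`, where `π_{k-m}` goes left; so the trajectory
runs around the cycle `k → k + ℓ - 1 → ⋯ → k + 1 → k` and earns `r_k` exactly at the multiples
of `ℓ`. The value is then `r_k` times the geometric series in `γ^ℓ`. For `k = 1` both sides
vanish: state `1` is absorbing and `r_1 = 0`.
-/

/-- Actions of the deterministic MDP `M(γ, ε, ℓ)`. -/
inductive Act where
  | left : Act
  | right : Act
deriving DecidableEq

/-- Deterministic transition: state `1` is absorbing; from `i ≥ 2`, `left` moves to `i - 1`
and `right` moves to `i + ℓ - 1`. -/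
def nxt (ℓ : ℕ) (i : ℕ) (a : Act) : ℕ :=
  if i ≤ 1 then 1 else
    match a with
    | Act.left => i - 1
    | Act.right => i + ℓ - 1

/-- Reward: `0` in state `1` and for `left`; `r_i = −2ε(γ−γ^i)/(1−γ)` for `right` from `i ≥ 2`. -/
noncomputable def rew (γ ε : ℝ) (i : ℕ) (a : Act) : ℝ :=
  if i ≤ 1 then 0 else
    match a with
    | Act.left => 0
    | Act.right => -2 * ε * (γ - γ ^ i) / (1 - γ)

/-- `r_i = −2ε(γ−γ^i)/(1−γ)`. -/
noncomputable def rr (γ ε : ℝ) (i : ℕ) : ℝ := -2 * ε * (γ - γ ^ i) / (1 - γ)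

/-- Trajectory induced by a (possibly non-stationary) policy `σ` from state `s`. -/
def traj (ℓ : ℕ) (σ : ℕ → ℕ → Act) (s : ℕ) : ℕ → ℕ
  | 0 => s
  | (t+1) => nxt ℓ (traj ℓ σ s t) (σ t (traj ℓ σ s t))

/-- Discounted value of a (possibly non-stationary) policy `σ` from state `s`. -/
noncomputable def val (γ ε : ℝ) (ℓ : ℕ) (σ : ℕ → ℕ → Act) (s : ℕ) : ℝ :=
  ∑' t : ℕ, γ ^ t * rew γ ε (traj ℓ σ s t) (σ t (traj ℓ σ s t))

/-- Bellman operator of a stationary policy `π`. -/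
noncomputable def bellT (γ ε : ℝ) (ℓ : ℕ) (π : ℕ → Act) (v : ℕ → ℝ) : ℕ → ℝ :=
  fun i => rew γ ε i (π i) + γ * v (nxt ℓ i (π i))

/-- `π` is greedy with respect to `v`: `T_π v` is the pointwise max over the two actions. -/
noncomputable def IsGreedyD (γ ε : ℝ) (ℓ : ℕ) (π : ℕ → Act) (v : ℕ → ℝ) : Prop :=
  ∀ i, bellT γ ε ℓ π v i =
    max (rew γ ε i Act.left + γ * v (nxt ℓ i Act.left))
        (rew γ ε i Act.right + γ * v (nxt ℓ i Act.right))

/-- Composed Bellman operator `T_{π_k} T_{π_{k-1}} ⋯ T_{π_{k-n+1}}`. -/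
noncomputable def TcompD (γ ε : ℝ) (ℓ : ℕ) (π : ℤ → ℕ → Act) : ℕ → ℤ → (ℕ → ℝ) → (ℕ → ℝ)
  | 0, _ => id
  | (n+1), k => fun v => bellT γ ε ℓ (π k) (TcompD γ ε ℓ π n (k-1) v)

/-- The error terms used in the tightness construction. -/
noncomputable def errf (ε : ℝ) (ℓ : ℕ) (k i : ℕ) : ℝ :=
  if i = k then -ε else if i = k + ℓ then ε else 0

/-- The periodic non-stationary policy `π_{k,ℓ}` looping over `π_k, π_{k-1}, …, π_{k-ℓ+1}`. -/
def periodic (ℓ : ℕ) (π : ℤ → ℕ → Act) (k : ℤ) : ℕ → ℕ → Act :=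
  fun t => π (k - ((t % ℓ : ℕ) : ℤ))


/-- The policy `π_j` of the paper. -/
def rightOnlyAt (j : ℤ) (i : ℕ) : Act :=
  if (i : ℤ) = j ∧ 2 ≤ j then Act.right else Act.left

theorem traj_succ (ℓ : ℕ) (σ : ℕ → ℕ → Act) (s t : ℕ) :
    traj ℓ σ s (t + 1) = nxt ℓ (traj ℓ σ s t) (σ t (traj ℓ σ s t)) := rfl

theorem traj_from_one (ℓ : ℕ) (σ : ℕ → ℕ → Act) (t : ℕ) : traj ℓ σ 1 t = 1 := by
  induction t with
  | zero => rfl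
  | succ t ih => simp [traj_succ, ih, nxt]

section Rewards

variable (γ ε : ℝ)

theorem rew_one (a : Act) : rew γ ε 1 a = 0 := by
  simp [rew]

theorem rew_left (i : ℕ) : rew γ ε i Act.left = 0 := by
  unfold rew
  split_ifs <;> rfl

theorem rew_right_of_one_le {i : ℕ} (hi : 1 ≤ i) : rew γ ε i Act.right = rr γ ε i := by
  obtain rfl | hi := hi.eq_or_lt
  · simp [rew, rr]
  · simp [rew, rr, show ¬i ≤ 1 by omega]

end Rewards

theorem tsum_pow_mul_ite_mod_eq_zero {K : Type*} [NormedField K] [CompleteSpace K] {γ : K}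
    (hγ : ‖γ‖ < 1) {ℓ : ℕ} (hℓ : 0 < ℓ) (c : K) :
    ∑' t : ℕ, γ ^ t * (if t % ℓ = 0 then c else 0) = c / (1 - γ ^ ℓ) := by
  have hinj : Function.Injective (ℓ * ·) := fun a b h => Nat.eq_of_mul_eq_mul_left hℓ h
  have hsupp : Function.support (fun t : ℕ => γ ^ t * (if t % ℓ = 0 then c else 0))
      ⊆ Set.range (ℓ * ·) := by
    intro t ht
    by_cases hd : t % ℓ = 0
    · exact ⟨t / ℓ, Nat.mul_div_cancel' (Nat.dvd_of_mod_eq_zero hd)⟩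
    · simp [Function.mem_support, hd] at ht
  have hγℓ : ‖γ ^ ℓ‖ < 1 := by
    rw [norm_pow]
    exact pow_lt_one₀ (norm_nonneg _) hγ hℓ.ne'
  rw [← hinj.tsum_eq hsupp]
  calc ∑' n : ℕ, γ ^ (ℓ * n) * (if ℓ * n % ℓ = 0 then c else 0)
      = ∑' n : ℕ, (γ ^ ℓ) ^ n * c := by simp only [Nat.mul_mod_right, if_true, pow_mul]
    _ = c / (1 - γ ^ ℓ) := by
      rw [tsum_mul_right, tsum_geometric_of_norm_lt_one hγℓ, div_eq_inv_mul]

section Loop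

variable {ℓ k m : ℕ}

/-- The state at phase `m` of the loop `k → k + ℓ - 1 → k + ℓ - 2 → ⋯ → k + 1 → k`. -/
def loopState (k ℓ m : ℕ) : ℕ := if m = 0 then k else k + ℓ - m

theorem rightOnlyAt_loopState (hk : 2 ≤ k) (hm : m < ℓ) :
    rightOnlyAt (k - m) (loopState k ℓ m) = if m = 0 then Act.right else Act.left := by
  unfold rightOnlyAt loopState
  split_ifs <;> first | rfl | omega

theorem nxt_loopState (hk : 2 ≤ k) (hm : m < ℓ) :
    nxt ℓ (loopState k ℓ m) (if m = 0 then Act.right else Act.left) =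
      loopState k ℓ ((m + 1) % ℓ) := by
  obtain hlt | heq := Nat.lt_or_eq_of_le (Nat.succ_le_of_lt hm)
  · rw [Nat.mod_eq_of_lt hlt]
    unfold nxt loopState
    split_ifs <;> simp_all <;> omega
  · rw [← Nat.succ_eq_add_one, heq, Nat.mod_self]
    unfold nxt loopState
    split_ifs <;> simp_all <;> omega

theorem traj_periodic_rightOnlyAt (hℓ : 0 < ℓ) (hk : 2 ≤ k) (t : ℕ) :
    traj ℓ (periodic ℓ rightOnlyAt k) k t = loopState k ℓ (t % ℓ) := by
  induction t with
  | zero => simp [traj, loopState]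
  | succ t ih =>
    rw [traj_succ, ih, periodic, rightOnlyAt_loopState hk (Nat.mod_lt _ hℓ),
      nxt_loopState hk (Nat.mod_lt _ hℓ), Nat.mod_add_mod]

theorem rew_traj_periodic_rightOnlyAt (γ ε : ℝ) (hℓ : 0 < ℓ) (hk : 1 ≤ k) (t : ℕ) :
    rew γ ε (traj ℓ (periodic ℓ rightOnlyAt k) k t)
        (periodic ℓ rightOnlyAt k t (traj ℓ (periodic ℓ rightOnlyAt k) k t)) =
      if t % ℓ = 0 then rew γ ε k Act.right else 0 := by
  obtain rfl | hk := hk.eq_or_lt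
  · simp only [traj_from_one, rew_one, ite_self]
  · rw [traj_periodic_rightOnlyAt hℓ hk, periodic,
      rightOnlyAt_loopState hk (Nat.mod_lt _ hℓ)]
    split_ifs with h
    · simp [loopState, h]
    · exact rew_left γ ε _

end Loop

theorem detMDP_periodic_policy_value_general
    (γ ε : ℝ) (hγ0 : 0 < γ) (hγ1 : γ < 1) (ℓ : ℕ) (hℓ : 1 ≤ ℓ)
    (k : ℕ) (hk : 1 ≤ k)
    (π : ℤ → ℕ → Act)
    (hπ : ∀ (j : ℤ) (i : ℕ), π j i = if (i : ℤ) = j ∧ 2 ≤ j then Act.right else Act.left) :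
    (2 ≤ k → ∀ t : ℕ, traj ℓ (periodic ℓ π (k : ℤ)) k t =
      if t % ℓ = 0 then k else k + ℓ - t % ℓ) ∧
    val γ ε ℓ (periodic ℓ π (k : ℤ)) k = rew γ ε k Act.right / (1 - γ ^ ℓ) ∧
    val γ ε ℓ (periodic ℓ π (k : ℤ)) k = -2 * ε * (γ - γ ^ k) / ((1 - γ) * (1 - γ ^ ℓ)) := by
  obtain rfl : π = rightOnlyAt := funext fun j => funext (hπ j)
  have hval : val γ ε ℓ (periodic ℓ rightOnlyAt k) k = rew γ ε k Act.right / (1 - γ ^ ℓ) := by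
    simp only [val, rew_traj_periodic_rightOnlyAt γ ε hℓ hk]
    exact tsum_pow_mul_ite_mod_eq_zero (by rwa [Real.norm_of_nonneg hγ0.le]) hℓ _
  refine ⟨fun hk2 t => traj_periodic_rightOnlyAt hℓ hk2 t, hval, ?_⟩
  rw [hval, rew_right_of_one_le γ ε hk, rr, div_div]

/-- In `M(γ, ε, ℓ)`, the periodic non-stationary policy `π_{k,ℓ}` built from the policies
`π_j` (taking right in state `j` only) loops on the `ℓ`-cycle through `k` and has value
`r_k/(1−γ^ℓ) = −2ε(γ−γ^k)/((1−γ)(1−γ^ℓ))` at state `k`. -/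
theorem detMDP_periodic_policy_value
    (γ ε : ℝ) (hγ0 : 0 < γ) (hγ1 : γ < 1) (hε : 0 < ε) (ℓ : ℕ) (hℓ : 1 ≤ ℓ)
    (k : ℕ) (hk : 1 ≤ k)
    (π : ℤ → ℕ → Act)
    (hπ : ∀ (j : ℤ) (i : ℕ), π j i = if (i : ℤ) = j ∧ 2 ≤ j then Act.right else Act.left) :
    (2 ≤ k → ∀ t : ℕ, traj ℓ (periodic ℓ π (k : ℤ)) k t =
      if t % ℓ = 0 then k else k + ℓ - t % ℓ) ∧
    val γ ε ℓ (periodic ℓ π (k : ℤ)) k = rew γ ε k Act.right / (1 - γ ^ ℓ) ∧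
    val γ ε ℓ (periodic ℓ π (k : ℤ)) k = -2 * ε * (γ - γ ^ k) / ((1 - γ) * (1 - γ ^ ℓ)) :=
  detMDP_periodic_policy_value_general γ ε hγ0 hγ1 ℓ hℓ k hk π hπ
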